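/- The Gumbel-max identity: if g_1,…,g_m are i.i.d. standard Gumbel random variables and α ∈ (0,∞)^m, then P(argmax_j (log α_j + g_j) = k) = α_k / Σ_j α_j for each k. -/

import Mathlib

/-!
Put `Y j = exp (-(log α j + g j))`. Since `g j` is standard Gumbel,
`P (Y j ≥ x) = P (g j ≤ -log (α j * x)) = exp (-α j * x)` for `x > 0`, so the `Y j` are
independent exponential variables with rates `α j`, and `log α k + g k` is the strict maximum
exactly when `Y k` is the strict minimum. Conditioning on `Y k = t`, the others exceed `t` with
probability `exp (-b t)`, `b = ∑_{l ≠ k} α l`, and the Laplace transform of `Exp (α k)` at `b`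
is `α k / (α k + b)`.
-/

open MeasureTheory ProbabilityTheory Set Real

lemma expMeasure_eq_withDensity (r : ℝ) :
    expMeasure r = volume.withDensity (exponentialPDF r) := rfl

lemma measurable_exponentialPDF (r : ℝ) : Measurable (exponentialPDF r) :=
  (measurable_exponentialPDFReal r).ennreal_ofReal

lemma ae_nonneg_expMeasure (r : ℝ) : ∀ᵐ t ∂expMeasure r, 0 ≤ t := by
  rw [ae_iff]
  refine measure_mono_null (t := Iio 0) (fun t ht => not_le.1 ht) ?_
  rw [expMeasure_eq_withDensity, withDensity_apply _ measurableSet_Iio,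
    lintegral_exponentialPDF_of_nonpos le_rfl]

lemma expMeasure_Ioi {r x : ℝ} (hr : 0 < r) (hx : 0 ≤ x) :
    expMeasure r (Ioi x) = ENNReal.ofReal (exp (-(r * x))) := by
  have := isProbabilityMeasure_expMeasure hr
  have hexp : exp (-(r * x)) ≤ 1 := exp_le_one_iff.2 (by nlinarith)
  rw [← compl_Iic, prob_compl_eq_one_sub measurableSet_Iic, ← ofReal_cdf, cdf_expMeasure_eq hr,
    if_pos hx, ← ENNReal.ofReal_one, ← ENNReal.ofReal_sub _ (sub_nonneg.2 hexp), sub_sub_cancel]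

lemma expMeasure_Ici {r x : ℝ} (hr : 0 < r) (hx : 0 ≤ x) :
    expMeasure r (Ici x) = ENNReal.ofReal (exp (-(r * x))) := by
  have : NullSingletonClass (expMeasure r) := by
    rw [expMeasure_eq_withDensity]
    infer_instance
  rw [← measure_congr Ioi_ae_eq_Ici, expMeasure_Ioi hr hx]

lemma expMeasure_Ici_of_nonpos {r x : ℝ} (hr : 0 < r) (hx : x ≤ 0) :
    expMeasure r (Ici x) = 1 := by
  have := isProbabilityMeasure_expMeasure hr
  refine le_antisymm prob_le_one ?_
  calc 1 = expMeasure r (Ici 0) := by simp [expMeasure_Ici hr le_rfl]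
    _ ≤ expMeasure r (Ici x) := measure_mono (Ici_subset_Ici.2 hx)

lemma lintegral_exp_neg_mul_expMeasure {a b : ℝ} (ha : 0 < a) (hab : 0 < a + b) :
    ∫⁻ t, ENNReal.ofReal (exp (-(b * t))) ∂expMeasure a = ENNReal.ofReal (a / (a + b)) := by
  have hpdf : ∀ t, exponentialPDF a t * ENNReal.ofReal (exp (-(b * t)))
      = ENNReal.ofReal (a / (a + b)) * exponentialPDF (a + b) t := by
    intro t
    rcases lt_or_ge t 0 with ht | ht
    · simp [exponentialPDF_of_neg ht]
    · rw [exponentialPDF_of_nonneg ht, exponentialPDF_of_nonneg ht,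
        ← ENNReal.ofReal_mul (by positivity), ← ENNReal.ofReal_mul (by positivity)]
      congr 1
      field_simp
      rw [← exp_add]
      ring_nf
  rw [expMeasure_eq_withDensity, lintegral_withDensity_eq_lintegral_mul _
    (measurable_exponentialPDF a) (by fun_prop)]
  simp_rw [Pi.mul_apply, hpdf]
  rw [lintegral_const_mul _ (measurable_exponentialPDF _), lintegral_exponentialPDF_eq_one hab,
    mul_one]

lemma map_exp_neg_log_add_of_gumbel {Ω : Type*} [MeasurableSpace Ω] {P : Measure Ω}
    [IsProbabilityMeasure P] {g : Ω → ℝ} (hg : Measurable g)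
    (hcdf : ∀ x, P {ω | g ω ≤ x} = ENNReal.ofReal (exp (-exp (-x)))) {a : ℝ} (ha : 0 < a) :
    P.map (fun ω => exp (-(log a + g ω))) = expMeasure a := by
  have hY : Measurable fun ω => exp (-(log a + g ω)) := by fun_prop
  have := Measure.isProbabilityMeasure_map (μ := P) hY.aemeasurable
  refine Measure.ext_of_Ici _ _ fun x => ?_
  rw [Measure.map_apply hY measurableSet_Ici]
  rcases le_or_gt x 0 with hx | hx
  · rw [expMeasure_Ici_of_nonpos ha hx, ← measure_univ (μ := P)]
    congr 1
    exact eq_univ_of_forall fun ω => hx.trans (exp_pos _).le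
  · have hpre : (fun ω => exp (-(log a + g ω))) ⁻¹' Ici x = {ω | g ω ≤ -log (a * x)} := by
      ext ω
      simp only [mem_preimage, mem_Ici, mem_ofPred_eq, ← log_le_iff_le_exp hx,
        log_mul ha.ne' hx.ne']
      constructor <;> intro h <;> linarith
    rw [hpre, hcdf, neg_neg, exp_log (mul_pos ha hx), expMeasure_Ici ha hx.le]

lemma measure_pi_forall_lt {n : ℕ} {α : Type*} [LinearOrder α] [TopologicalSpace α]
    [OrderClosedTopology α] [MeasurableSpace α] [SecondCountableTopology α] [BorelSpace α]
    (μ : Fin (n + 1) → Measure α) [∀ i, SigmaFinite (μ i)] (k : Fin (n + 1)) :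
    Measure.pi μ {x | ∀ l, l ≠ k → x k < x l}
      = ∫⁻ t, ∏ j, μ (k.succAbove j) (Ioi t) ∂μ k := by
  set T : Set (α × (Fin n → α)) := {p | ∀ j, p.1 < p.2 j}
  have hT : MeasurableSet T := by
    simp only [T, ofPred_forall]
    exact .iInter fun j =>
      measurableSet_lt measurable_fst ((measurable_pi_apply j).comp measurable_snd)
  have hpre : {x : Fin (n + 1) → α | ∀ l, l ≠ k → x k < x l}
      = MeasurableEquiv.piFinSuccAbove (fun _ => α) k ⁻¹' T := by
    ext x
    simp [T, Fin.forall_iff_succAbove k, Fin.removeNth]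
  rw [hpre, (measurePreserving_piFinSuccAbove μ k).measure_preimage hT.nullMeasurableSet,
    Measure.prod_apply hT]
  congr! with t
  rw [← Measure.pi_pi]
  congr 1
  ext y
  simp [T]

lemma expMeasure_pi_forall_lt {n : ℕ} {β : Fin (n + 1) → ℝ} (hβ : ∀ j, 0 < β j)
    (k : Fin (n + 1)) :
    Measure.pi (fun j => expMeasure (β j)) {x | ∀ l, l ≠ k → x k < x l}
      = ENNReal.ofReal (β k / ∑ j, β j) := by
  have := fun j => isProbabilityMeasure_expMeasure (hβ j)
  set b := ∑ j : Fin n, β (k.succAbove j)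
  have hb : 0 ≤ b := Finset.sum_nonneg fun j _ => (hβ _).le
  have hsurvival : ∀ᵐ t ∂expMeasure (β k),
      ∏ j, expMeasure (β (k.succAbove j)) (Ioi t) = ENNReal.ofReal (exp (-(b * t))) := by
    filter_upwards [ae_nonneg_expMeasure _] with t ht
    rw [Finset.prod_congr rfl fun j _ => expMeasure_Ioi (hβ _) ht,
      ← ENNReal.ofReal_prod_of_nonneg fun j _ => (exp_nonneg _), ← exp_sum, Finset.sum_mul,
      ← Finset.sum_neg_distrib]
  rw [measure_pi_forall_lt, lintegral_congr_ae hsurvival,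
    lintegral_exp_neg_mul_expMeasure (hβ k) (by linarith [hβ k]), Fin.sum_univ_succAbove β k]

theorem stmt_14_general (m : ℕ)
    {Ω : Type*} [MeasurableSpace Ω] (P : Measure Ω) [IsProbabilityMeasure P]
    (g : Fin m → Ω → ℝ) (hmeas : ∀ j, Measurable (g j))
    (hindep : iIndepFun g P)
    (hcdf : ∀ j : Fin m, ∀ x : ℝ,
      P {ω | g j ω ≤ x} = ENNReal.ofReal (Real.exp (-Real.exp (-x))))
    (α : Fin m → ℝ) (hα : ∀ j, 0 < α j) (k : Fin m) :
    P {ω | ∀ l : Fin m, l ≠ k →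
        Real.log (α l) + g l ω < Real.log (α k) + g k ω}
      = ENNReal.ofReal (α k / ∑ j, α j) := by
  obtain ⟨n, rfl⟩ := Nat.exists_eq_add_one_of_ne_zero k.pos.ne'
  set Y : Fin (n + 1) → Ω → ℝ := fun j ω => exp (-(log (α j) + g j ω))
  have hY : ∀ j, Measurable (Y j) := fun j => by fun_prop
  have hlaw : P.map (fun ω j => Y j ω) = Measure.pi fun j => expMeasure (α j) := by
    rw [(hindep.comp (fun j t => exp (-(log (α j) + t))) fun j => by fun_prop).map_fun_eq_pi_map
      fun j => (hY j).aemeasurable]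
    exact congrArg Measure.pi
      (funext fun j => map_exp_neg_log_add_of_gumbel (hmeas j) (hcdf j) (hα j))
  have hS : MeasurableSet {x : Fin (n + 1) → ℝ | ∀ l, l ≠ k → x k < x l} := by
    simp only [ofPred_forall]
    exact .iInter fun l => .iInter fun _ =>
      measurableSet_lt (measurable_pi_apply k) (measurable_pi_apply l)
  have hevent : {ω | ∀ l, l ≠ k → log (α l) + g l ω < log (α k) + g k ω}
      = (fun ω j => Y j ω) ⁻¹' {x | ∀ l, l ≠ k → x k < x l} := by
    ext ω
    simp only [mem_ofPred_eq, mem_preimage, Y, exp_lt_exp, neg_lt_neg_iff]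
  rw [hevent, ← Measure.map_apply (measurable_pi_lambda _ hY) hS, hlaw,
    expMeasure_pi_forall_lt hα k]

/-- Gumbel-max identity. If g₁,…,g_m are i.i.d. standard Gumbel random
variables (CDF x ↦ exp(−exp(−x))) and α ∈ (0,∞)^m, then the probability that
log α_k + g_k is the (strict) maximum of the values log α_j + g_j equals
α_k / Σ_j α_j. -/
theorem stmt_14 (m : ℕ) (hm : 1 ≤ m)
    {Ω : Type*} [MeasurableSpace Ω] (P : Measure Ω) [IsProbabilityMeasure P]
    (g : Fin m → Ω → ℝ) (hmeas : ∀ j, Measurable (g j))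
    (hindep : iIndepFun g P)
    (hcdf : ∀ j : Fin m, ∀ x : ℝ,
      P {ω | g j ω ≤ x} = ENNReal.ofReal (Real.exp (-Real.exp (-x))))
    (α : Fin m → ℝ) (hα : ∀ j, 0 < α j) (k : Fin m) :
    P {ω | ∀ l : Fin m, l ≠ k →
        Real.log (α l) + g l ω < Real.log (α k) + g k ω}
      = ENNReal.ofReal (α k / ∑ j, α j) :=
  stmt_14_general m P g hmeas hindep hcdf α hα k
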